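/- arXiv:1107.0146 — 3 statements merged into one kernel-verified Lean document; each statement's English description precedes it below -/
import Mathlib

section
/- Let A be a commutative local ring with residue field k, let R be an A-algebra, and let M be a nonzero R-module which is finitely generated as an A-module. If M ⊗_A k is an indecomposable module over R ⊗_A k, then M is an indecomposable R-module. -/
/-!
A decomposition `M ≅ N₁ × N₂` into nonzero `R`-submodules base changes to an `R`-linear
decomposition `M ⊗_A k ≅ (N₁ ⊗_A k) × (N₂ ⊗_A k)`. Each `Nᵢ` is a direct summand of `M`, hence
finitely generated over `A`, so `Nᵢ ⊗_A k ≠ 0` by Nakayama's lemma.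
-/

open TensorProduct

theorem Submodule.exists_isCompl_ne_bot_of_linearEquiv_prod {R M P₁ P₂ : Type*} [Ring R]
    [AddCommGroup M] [Module R M] [AddCommGroup P₁] [Module R P₁] [AddCommGroup P₂]
    [Module R P₂] [Nontrivial P₁] [Nontrivial P₂] (e : M ≃ₗ[R] P₁ × P₂) :
    ∃ N₁ N₂ : Submodule R M, N₁ ≠ ⊥ ∧ N₂ ≠ ⊥ ∧ IsCompl N₁ N₂ := by
  refine ⟨(LinearMap.range (LinearMap.inl R P₁ P₂)).map (e.symm : P₁ × P₂ →ₗ[R] M),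
    (LinearMap.range (LinearMap.inr R P₁ P₂)).map (e.symm : P₁ × P₂ →ₗ[R] M), ?_, ?_, ?_⟩
  · simpa only [ne_eq, Submodule.map_eq_bot_iff, LinearMap.range_eq_bot] using
      LinearMap.ne_zero_of_injective LinearMap.inl_injective
  · simpa only [ne_eq, Submodule.map_eq_bot_iff, LinearMap.range_eq_bot] using
      LinearMap.ne_zero_of_injective LinearMap.inr_injective
  · exact (Submodule.orderIsoMapComap e.symm).isCompl LinearMap.isCompl_range_inl_inr

theorem IsLocalRing.nontrivial_tensorProduct_residueField {A N : Type*} [CommRing A]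
    [IsLocalRing A] [AddCommGroup N] [Module A N] [Module.Finite A N] [Nontrivial N] :
    Nontrivial (N ⊗[A] IsLocalRing.ResidueField A) := by
  rw [(TensorProduct.comm A _ _).nontrivial_congr, ← not_subsingleton_iff_nontrivial,
    IsLocalRing.subsingleton_tensorProduct, not_subsingleton_iff_nontrivial]
  infer_instance

theorem Submodule.finite_of_isCompl {A R M : Type*} [CommSemiring A] [Ring R] [Algebra A R]
    [AddCommGroup M] [Module R M] [Module A M] [IsScalarTower A R M] [Module.Finite A M]
    {N₁ N₂ : Submodule R M} (h : IsCompl N₁ N₂) : Module.Finite A N₁ :=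
  Module.Finite.of_surjective ((N₁.projectionOnto N₂ h).restrictScalars A)
    (N₁.projectionOnto_surjective h)

theorem stmt6_general {A R M : Type*} [CommRing A] [IsLocalRing A] [Ring R] [Algebra A R]
    [AddCommGroup M] [Module R M] [Module A M] [IsScalarTower A R M]
    [SMulCommClass A R M] [Module.Finite A M]
    (hk : ¬∃ (N₁ N₂ : Submodule R (M ⊗[A] IsLocalRing.ResidueField A)),
      N₁ ≠ ⊥ ∧ N₂ ≠ ⊥ ∧ IsCompl N₁ N₂) :
    ¬∃ (N₁ N₂ : Submodule R M), N₁ ≠ ⊥ ∧ N₂ ≠ ⊥ ∧ IsCompl N₁ N₂ := by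
  rintro ⟨N₁, N₂, h₁, h₂, hN⟩
  have := Submodule.nontrivial_iff_ne_bot.2 h₁
  have := Submodule.nontrivial_iff_ne_bot.2 h₂
  have := Submodule.finite_of_isCompl (A := A) hN
  have := Submodule.finite_of_isCompl (A := A) hN.symm
  have := IsLocalRing.nontrivial_tensorProduct_residueField (A := A) (N := N₁)
  have := IsLocalRing.nontrivial_tensorProduct_residueField (A := A) (N := N₂)
  exact hk (Submodule.exists_isCompl_ne_bot_of_linearEquiv_prod
    ((AlgebraTensorModule.congr (Submodule.prodEquivOfIsCompl N₁ N₂ hN).symm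
      (LinearEquiv.refl A _)).trans (prodLeft A R N₁ N₂ _)))

/-- Let `A` be a commutative local ring with residue field `k`, `R` an `A`-algebra and
`M` a nonzero `R`-module which is finitely generated over `A`.  If `kM = M ⊗_A k` is
indecomposable over `kR` (equivalently, over `R`), then `M` is an indecomposable
`R`-module. -/
theorem stmt6 {A R M : Type*} [CommRing A] [IsLocalRing A] [Ring R] [Algebra A R]
    [AddCommGroup M] [Module R M] [Module A M] [IsScalarTower A R M]
    [SMulCommClass A R M] [Module.Finite A M] [Nontrivial M]
    (hk : ¬∃ (N₁ N₂ : Submodule R (M ⊗[A] IsLocalRing.ResidueField A)),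
      N₁ ≠ ⊥ ∧ N₂ ≠ ⊥ ∧ IsCompl N₁ N₂) :
    ¬∃ (N₁ N₂ : Submodule R M), N₁ ≠ ⊥ ∧ N₂ ≠ ⊥ ∧ IsCompl N₁ N₂ :=
  stmt6_general hk
end

section
/- Fix positive integers e and m. Let α = (α₁ ≤ α₂ ≤ … ≤ α_m) and β = (β₁ ≤ … ≤ β_m) be weakly increasing m-tuples of nonnegative integers satisfying α_m − α₁ ≤ e and β_m − β₁ ≤ e. For i ∈ ℤ/e define N_i(α) = Σ_{j=1}^m #{ y ∈ ℤ : 1 ≤ y ≤ α_j, y ≡ i (mod e) }. If N_i(α) = N_i(β) for every i ∈ ℤ/e, then α = β. -/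
private lemma residue_gap {e x y : ℕ} (h : (x : ZMod e) = (y : ZMod e)) (hlt : y < x) :
    y + e ≤ x := by
  have h1 : y ≡ x [MOD e] := ((ZMod.natCast_eq_natCast_iff x y e).mp h).symm
  have hd : e ∣ x - y := (Nat.modEq_iff_dvd' hlt.le).mp h1
  have := Nat.le_of_dvd (by omega) hd
  omega

private lemma Fcard_eq_m {m : ℕ} (hm : 0 < m) {α : Fin m → ℕ} (hmono : Monotone α)
    {x : ℕ} (hx : x ≤ α ⟨0, hm⟩) :
    (Finset.univ.filter (fun j : Fin m => x ≤ α j)).card = m := by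
  rw [Finset.filter_true_of_mem, Finset.card_univ, Fintype.card_fin]
  intro j _
  exact hx.trans (hmono (Fin.le_def.mpr (Nat.zero_le _)))

private lemma Fcard_lt_m {m : ℕ} (hm : 0 < m) {α : Fin m → ℕ}
    {x : ℕ} (hx : α ⟨0, hm⟩ < x) :
    (Finset.univ.filter (fun j : Fin m => x ≤ α j)).card < m := by
  have hss : (Finset.univ.filter (fun j : Fin m => x ≤ α j)) ⊂ Finset.univ := by
    rw [Finset.ssubset_univ_iff]
    intro hcon
    have : (⟨0, hm⟩ : Fin m) ∈ Finset.univ.filter (fun j : Fin m => x ≤ α j) := by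
      rw [hcon]; exact Finset.mem_univ _
    simp only [Finset.mem_filter] at this
    omega
  have := Finset.card_lt_card hss
  simpa using this

private lemma Fcard_eq_zero {m e : ℕ} (hm : 0 < m) {α : Fin m → ℕ}
    (hgap : ∀ j k : Fin m, α j ≤ α k + e) {x : ℕ} (hx : α ⟨0, hm⟩ + e < x) :
    (Finset.univ.filter (fun j : Fin m => x ≤ α j)).card = 0 := by
  rw [Finset.card_eq_zero, Finset.filter_eq_empty_iff]
  intro j _
  have := hgap j ⟨0, hm⟩
  omega

private lemma Nsum (e m T : ℕ) (α : Fin m → ℕ) (hT : ∀ j, α j ≤ T) (i : ZMod e) :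
    (∑ j : Fin m, ((Finset.Icc 1 (α j)).filter (fun y : ℕ => (y : ZMod e) = i)).card)
      = ∑ x ∈ (Finset.Icc 1 T).filter (fun y : ℕ => (y : ZMod e) = i),
          (Finset.univ.filter (fun j : Fin m => x ≤ α j)).card := by
  have step : ∀ j : Fin m,
      ((Finset.Icc 1 (α j)).filter (fun y : ℕ => (y : ZMod e) = i)).card
        = ∑ x ∈ (Finset.Icc 1 T).filter (fun y : ℕ => (y : ZMod e) = i),
            if x ≤ α j then 1 else 0 := by
    intro j
    rw [← Finset.card_filter]
    congr 1
    ext y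
    simp only [Finset.mem_filter, Finset.mem_Icc]
    constructor
    · rintro ⟨⟨h1, h2⟩, hp⟩
      exact ⟨⟨⟨h1, h2.trans (hT j)⟩, hp⟩, h2⟩
    · rintro ⟨⟨⟨h1, _⟩, hp⟩, h2⟩
      exact ⟨⟨h1, h2⟩, hp⟩
  calc (∑ j : Fin m, ((Finset.Icc 1 (α j)).filter (fun y : ℕ => (y : ZMod e) = i)).card)
      = ∑ j : Fin m, ∑ x ∈ (Finset.Icc 1 T).filter (fun y : ℕ => (y : ZMod e) = i),
          if x ≤ α j then 1 else 0 := Finset.sum_congr rfl (fun j _ => step j)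
    _ = ∑ x ∈ (Finset.Icc 1 T).filter (fun y : ℕ => (y : ZMod e) = i),
          ∑ j : Fin m, if x ≤ α j then 1 else 0 := Finset.sum_comm
    _ = _ := Finset.sum_congr rfl (fun x _ => (Finset.card_filter _ _).symm)

private lemma aux_le (e m : ℕ) (he : 0 < e) (hm : 0 < m)
    (α β : Fin m → ℕ) (hαmono : Monotone α) (hβmono : Monotone β)
    (hαgap : ∀ j k : Fin m, α j ≤ α k + e) (hβgap : ∀ j k : Fin m, β j ≤ β k + e)
    (hN : ∀ i : ZMod e,
      (∑ j : Fin m, ((Finset.Icc 1 (α j)).filter (fun y : ℕ => (y : ZMod e) = i)).card)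
        = ∑ j : Fin m, ((Finset.Icc 1 (β j)).filter (fun y : ℕ => (y : ZMod e) = i)).card) :
    β ⟨0, hm⟩ ≤ α ⟨0, hm⟩ := by
  by_contra hab
  push_neg at hab
  set a := α ⟨0, hm⟩ with ha
  set b := β ⟨0, hm⟩ with hb
  set T := max a b + e with hT
  have hTα : ∀ j, α j ≤ T := fun j => le_trans (hαgap j ⟨0, hm⟩)
    (by have := le_max_left a b; omega)
  have hTβ : ∀ j, β j ≤ T := fun j => le_trans (hβgap j ⟨0, hm⟩)
    (by have := le_max_right a b; omega)
  set i := ((a + 1 : ℕ) : ZMod e) with hi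
  have hEq := hN i
  rw [Nsum e m T α hTα i, Nsum e m T β hTβ i] at hEq
  have hlt : (∑ x ∈ (Finset.Icc 1 T).filter (fun y : ℕ => (y : ZMod e) = i),
        (Finset.univ.filter (fun j : Fin m => x ≤ α j)).card)
      < ∑ x ∈ (Finset.Icc 1 T).filter (fun y : ℕ => (y : ZMod e) = i),
        (Finset.univ.filter (fun j : Fin m => x ≤ β j)).card := by
    have hmem : (a + 1) ∈ (Finset.Icc 1 T).filter (fun y : ℕ => (y : ZMod e) = i) := by
      simp only [Finset.mem_filter, Finset.mem_Icc]
      refine ⟨⟨by omega, ?_⟩, by trivial⟩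
      have := le_max_right a b
      omega
    refine Finset.sum_lt_sum ?_ ⟨a + 1, hmem, ?_⟩
    · intro x hx
      simp only [Finset.mem_filter, Finset.mem_Icc] at hx
      rcases le_or_gt x b with hxb | hxb
      · rw [Fcard_eq_m hm hβmono hxb]
        have := Finset.card_filter_le (Finset.univ : Finset (Fin m))
          (fun j : Fin m => x ≤ α j)
        simpa using this
      · have hne : a + 1 < x := by omega
        have := residue_gap hx.2 hne
        rw [Fcard_eq_zero hm hαgap (by omega)]
        exact Nat.zero_le _
    · rw [Fcard_eq_m hm hβmono (by omega : a + 1 ≤ b)]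
      exact Fcard_lt_m hm (by omega)
  omega

private lemma mem_char {m : ℕ} (hm : 0 < m) {α : Fin m → ℕ} (hmono : Monotone α)
    (j : Fin m) (x : ℕ) :
    x ≤ α j ↔ m - j.val ≤ (Finset.univ.filter (fun k : Fin m => x ≤ α k)).card := by
  constructor
  · intro hx
    have hsub : Finset.Ici j ⊆ Finset.univ.filter (fun k : Fin m => x ≤ α k) := by
      intro k hk
      simp only [Finset.mem_filter, Finset.mem_univ, true_and]
      exact hx.trans (hmono (Finset.mem_Ici.mp hk))
    have := Finset.card_le_card hsub
    rwa [Fin.card_Ici] at this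
  · intro hcard
    by_contra hx
    push_neg at hx
    have hsub : Finset.univ.filter (fun k : Fin m => x ≤ α k) ⊆ Finset.Ioi j := by
      intro k hk
      simp only [Finset.mem_filter, Finset.mem_univ, true_and] at hk
      rw [Finset.mem_Ioi]
      by_contra hkj
      push_neg at hkj
      exact absurd (hk.trans (hmono hkj)) (not_le.mpr hx)
    have := Finset.card_le_card hsub
    rw [Fin.card_Ioi] at this
    have hj := j.isLt
    omega

/-- Rigidity of residue-node counts: two weakly increasing `m`-tuples of natural
numbers whose entries each span an interval of length at most `e` and which have the
same number of nodes in every residue class modulo `e` must be equal. -/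
theorem stmt12 (e m : ℕ) (he : 0 < e) (hm : 0 < m)
    (α β : Fin m → ℕ) (hαmono : Monotone α) (hβmono : Monotone β)
    (hαgap : ∀ j k : Fin m, α j ≤ α k + e) (hβgap : ∀ j k : Fin m, β j ≤ β k + e)
    (hN : ∀ i : ZMod e,
      (∑ j : Fin m, ((Finset.Icc 1 (α j)).filter (fun y : ℕ => (y : ZMod e) = i)).card)
        = ∑ j : Fin m, ((Finset.Icc 1 (β j)).filter (fun y : ℕ => (y : ZMod e) = i)).card) :
    α = β := by
  have hba := aux_le e m he hm α β hαmono hβmono hαgap hβgap hN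
  have hab := aux_le e m he hm β α hβmono hαmono hβgap hαgap (fun i => (hN i).symm)
  have hab0 : α ⟨0, hm⟩ = β ⟨0, hm⟩ := le_antisymm hab hba
  set a := α ⟨0, hm⟩ with ha
  set T := a + e with hT
  have hTα : ∀ j, α j ≤ T := fun j => hαgap j ⟨0, hm⟩
  have hTβ : ∀ j, β j ≤ T := fun j => by
    have := hβgap j ⟨0, hm⟩; omega
  have hN' : ∀ i : ZMod e,
      (∑ x ∈ (Finset.Icc 1 T).filter (fun y : ℕ => (y : ZMod e) = i),
          (Finset.univ.filter (fun j : Fin m => x ≤ α j)).card)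
        = ∑ x ∈ (Finset.Icc 1 T).filter (fun y : ℕ => (y : ZMod e) = i),
          (Finset.univ.filter (fun j : Fin m => x ≤ β j)).card := by
    intro i
    rw [← Nsum e m T α hTα i, ← Nsum e m T β hTβ i]
    exact hN i
  have hFG : ∀ x : ℕ, (Finset.univ.filter (fun j : Fin m => x ≤ α j)).card
      = (Finset.univ.filter (fun j : Fin m => x ≤ β j)).card := by
    intro x
    rcases le_or_gt x a with hxa | hxa
    · rw [Fcard_eq_m hm hαmono hxa, Fcard_eq_m hm hβmono (hab0 ▸ hxa)]
    rcases le_or_gt x T with hxT | hxT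
    · -- main case: a < x ≤ a + e
      set S := (Finset.Icc 1 T).filter (fun y : ℕ => (y : ZMod e) = ((x : ℕ) : ZMod e))
        with hS
      have hxS : x ∈ S := by
        simp only [hS, Finset.mem_filter, Finset.mem_Icc]
        exact ⟨⟨by omega, hxT⟩, by trivial⟩
      have herase : ∀ y ∈ S.erase x,
          (Finset.univ.filter (fun j : Fin m => y ≤ α j)).card
            = (Finset.univ.filter (fun j : Fin m => y ≤ β j)).card := by
        intro y hy
        rw [Finset.mem_erase] at hy
        obtain ⟨hyx, hyS⟩ := hy
        simp only [hS, Finset.mem_filter, Finset.mem_Icc] at hyS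
        rcases lt_or_gt_of_ne hyx with hlt | hgt
        · have := residue_gap hyS.2.symm hlt
          have hy_le : y ≤ a := by omega
          rw [Fcard_eq_m hm hαmono hy_le, Fcard_eq_m hm hβmono (hab0 ▸ hy_le)]
        · have := residue_gap hyS.2 hgt
          omega
      have h1 : (Finset.univ.filter (fun j : Fin m => x ≤ α j)).card
          + (∑ y ∈ S.erase x, (Finset.univ.filter (fun j : Fin m => y ≤ α j)).card)
          = ∑ y ∈ S, (Finset.univ.filter (fun j : Fin m => y ≤ α j)).card :=
        Finset.add_sum_erase S
          (fun y => (Finset.univ.filter (fun j : Fin m => y ≤ α j)).card) hxS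
      have h2 : (Finset.univ.filter (fun j : Fin m => x ≤ β j)).card
          + (∑ y ∈ S.erase x, (Finset.univ.filter (fun j : Fin m => y ≤ β j)).card)
          = ∑ y ∈ S, (Finset.univ.filter (fun j : Fin m => y ≤ β j)).card :=
        Finset.add_sum_erase S
          (fun y => (Finset.univ.filter (fun j : Fin m => y ≤ β j)).card) hxS
      have h3 : (∑ y ∈ S.erase x, (Finset.univ.filter (fun j : Fin m => y ≤ α j)).card)
          = ∑ y ∈ S.erase x, (Finset.univ.filter (fun j : Fin m => y ≤ β j)).card :=
        Finset.sum_congr rfl herase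
      have h4 := hN' ((x : ℕ) : ZMod e)
      simp only [← hS] at h4
      omega
    · rw [Fcard_eq_zero hm hαgap (by omega), Fcard_eq_zero hm hβgap (by omega)]
  funext j
  apply le_antisymm
  · exact (mem_char hm hβmono j (α j)).mpr
      (by rw [← hFG]; exact (mem_char hm hαmono j (α j)).mp le_rfl)
  · exact (mem_char hm hαmono j (β j)).mpr
      (by rw [hFG]; exact (mem_char hm hβmono j (β j)).mp le_rfl)
end

section
/- Let R̄ be a ℤ-graded ring and let M, M' be graded R̄-modules which are isomorphic as ungraded R̄-modules, and suppose the endomorphism ring End_R(M) of the underlying ungraded module is local. Then there exist an integer j and an isomorphism of graded R̄-modules M' ≅ M{j}, where M{j} denotes M with grading shifted by j (M{j}^i = M^{i+j}). -/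
open DirectSum

/-!
Split an ungraded isomorphism `f : M ≃ M'` into its homogeneous components `f_k`, which shift
degrees by `k` and are `R`-linear because `R` is graded. The sum `∑ₖ f_k` need not be finite,
but on a fixed `x ≠ 0` only finitely many `f_k x` are nonzero and they add up to `f x`. So some
finite sum of the endomorphisms `f⁻¹ ∘ f_k` fixes `x`, and in the local ring `End_R M` such an
endomorphism is a unit (otherwise `1 - e` would be a unit killing `x`). Nonunits of a local
ring are closed under addition, so one summand `f⁻¹ ∘ f_k` is a unit, and `f_k` is then a
bijection of degree `k`, that is, a graded isomorphism `M{-k} ≅ M'`.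
-/

section GradedComponents

variable {ι M M' : Type*} [DecidableEq ι]
  [AddCommGroup M] (ℳ : ι → AddSubgroup M) [Decomposition ℳ]
  [AddCommGroup M'] (ℳ' : ι → AddSubgroup M') [Decomposition ℳ']

noncomputable def gradedProj (n : ι) : M →+ M :=
  (ℳ n).subtype.comp ((DFinsupp.evalAddMonoidHom n).comp (decomposeAddEquiv ℳ).toAddMonoidHom)

@[simp]
lemma gradedProj_apply (n : ι) (x : M) : gradedProj ℳ n x = decompose ℳ x n := rfl

lemma gradedProj_mem (n : ι) (x : M) : gradedProj ℳ n x ∈ ℳ n :=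
  (decompose ℳ x n).2

variable {ℳ} in
lemma gradedProj_of_mem_same {n : ι} {x : M} (hx : x ∈ ℳ n) : gradedProj ℳ n x = x :=
  decompose_of_mem_same ℳ hx

variable {ℳ} in
lemma gradedProj_of_mem_ne {m n : ι} {x : M} (hx : x ∈ ℳ m) (h : m ≠ n) :
    gradedProj ℳ n x = 0 :=
  decompose_of_mem_ne ℳ hx h

lemma exists_finset_forall_superset_sum_gradedProj (x : M) :
    ∃ S : Finset ι, ∀ T, S ⊆ T → ∑ n ∈ T, gradedProj ℳ n x = x := by
  classical
  refine ⟨(decompose ℳ x).support, fun T hT => ?_⟩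
  rw [← Finset.sum_subset hT fun n _ hn => by simpa using hn]
  exact sum_support_decompose ℳ x

variable [AddGroup ι]

lemma gradedProj_add_smul {R : Type*} [Ring R] [Module R M] {𝒜 : ι → AddSubgroup R}
    (hM : ∀ i j, ∀ r ∈ 𝒜 i, ∀ x ∈ ℳ j, r • x ∈ ℳ (i + j))
    {d : ι} {r : R} (hr : r ∈ 𝒜 d) (n : ι) (x : M) :
    gradedProj ℳ (d + n) (r • x) = r • gradedProj ℳ n x := by
  induction x using Decomposition.inductionOn ℳ with
  | zero => simp
  | @homogeneous m x =>
    obtain ⟨x, hx⟩ := x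
    have hrx := hM d m r hr x hx
    by_cases h : m = n
    · subst h
      rw [gradedProj_of_mem_same hrx, gradedProj_of_mem_same hx]
    · rw [gradedProj_of_mem_ne hrx (by simpa using h), gradedProj_of_mem_ne hx h, smul_zero]
  | add a b ha hb => rw [smul_add, map_add, ha, hb, map_add, smul_add]

noncomputable def gradedComponent (f : M →+ M') (k : ι) : M →+ M' :=
  (toAddMonoid fun i => (gradedProj ℳ' (i + k)).comp (f.comp (ℳ i).subtype)).comp
    (decomposeAddEquiv ℳ).toAddMonoidHom

variable {ℳ} in
lemma gradedComponent_of_mem (f : M →+ M') (k : ι) {i : ι} {x : M} (hx : x ∈ ℳ i) :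
    gradedComponent ℳ ℳ' f k x = gradedProj ℳ' (i + k) (f x) := by
  simp [gradedComponent, decompose_of_mem ℳ hx]

variable {ℳ} in
lemma gradedComponent_mem (f : M →+ M') (k : ι) {i : ι} {x : M} (hx : x ∈ ℳ i) :
    gradedComponent ℳ ℳ' f k x ∈ ℳ' (i + k) :=
  gradedComponent_of_mem ℳ' f k hx ▸ gradedProj_mem ℳ' _ _

lemma exists_finset_forall_superset_sum_gradedComponent (f : M →+ M') (x : M) :
    ∃ S : Finset ι, ∀ T, S ⊆ T → ∑ k ∈ T, gradedComponent ℳ ℳ' f k x = f x := by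
  induction x using Decomposition.inductionOn ℳ with
  | zero => exact ⟨∅, fun T _ => by simp⟩
  | @homogeneous i x =>
    obtain ⟨x, hx⟩ := x
    obtain ⟨S, hS⟩ := exists_finset_forall_superset_sum_gradedProj ℳ' (f x)
    refine ⟨S.image (-i + ·), fun T hT => ?_⟩
    have hST : S ⊆ T.image (i + ·) := fun n hn =>
      Finset.mem_image.mpr ⟨-i + n, hT (Finset.mem_image_of_mem _ hn), add_neg_cancel_left i n⟩
    rw [← hS _ hST, Finset.sum_image fun _ _ _ _ => add_left_cancel]
    exact Finset.sum_congr rfl fun k _ => gradedComponent_of_mem ℳ' f k hx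
  | add a b ha hb =>
    obtain ⟨Sa, ha⟩ := ha
    obtain ⟨Sb, hb⟩ := hb
    refine ⟨Sa ∪ Sb, fun T hT => ?_⟩
    simp only [map_add, Finset.sum_add_distrib]
    rw [ha T (Finset.subset_union_left.trans hT), hb T (Finset.subset_union_right.trans hT)]


lemma gradedComponent_smul {R : Type*} [Ring R] [Module R M] [Module R M']
    {𝒜 : ι → AddSubgroup R} [Decomposition 𝒜]
    (hM : ∀ i j, ∀ r ∈ 𝒜 i, ∀ x ∈ ℳ j, r • x ∈ ℳ (i + j))
    (hM' : ∀ i j, ∀ r ∈ 𝒜 i, ∀ x ∈ ℳ' j, r • x ∈ ℳ' (i + j))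
    (f : M →ₗ[R] M') (k : ι) (r : R) (x : M) :
    gradedComponent ℳ ℳ' f.toAddMonoidHom k (r • x) =
      r • gradedComponent ℳ ℳ' f.toAddMonoidHom k x := by
  induction r using Decomposition.inductionOn 𝒜 generalizing x with
  | zero => simp
  | @homogeneous d r =>
    obtain ⟨r, hr⟩ := r
    induction x using Decomposition.inductionOn ℳ with
    | zero => simp
    | @homogeneous i x =>
      obtain ⟨x, hx⟩ := x
      rw [gradedComponent_of_mem ℳ' _ k (hM d i r hr x hx), gradedComponent_of_mem ℳ' _ k hx,
        LinearMap.toAddMonoidHom_coe, map_smul, add_assoc]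
      exact gradedProj_add_smul ℳ' hM' hr _ _
    | add a b ha hb => rw [smul_add, map_add, ha, hb, map_add, smul_add]
  | add a b ha hb => rw [add_smul, map_add, ha, hb, add_smul]

noncomputable def gradedComponentₗ {R : Type*} [Ring R] [Module R M] [Module R M']
    {𝒜 : ι → AddSubgroup R} [Decomposition 𝒜]
    (hM : ∀ i j, ∀ r ∈ 𝒜 i, ∀ x ∈ ℳ j, r • x ∈ ℳ (i + j))
    (hM' : ∀ i j, ∀ r ∈ 𝒜 i, ∀ x ∈ ℳ' j, r • x ∈ ℳ' (i + j))
    (f : M →ₗ[R] M') (k : ι) : M →ₗ[R] M' where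
  __ := gradedComponent ℳ ℳ' f.toAddMonoidHom k
  map_smul' := gradedComponent_smul ℳ ℳ' hM hM' f k

variable {ℳ ℳ'}

lemma gradedProj_map_of_forall_mem {g : M →+ M'} {k : ι}
    (hg : ∀ i, ∀ x ∈ ℳ i, g x ∈ ℳ' (i + k)) (i : ι) (x : M) :
    gradedProj ℳ' (i + k) (g x) = g (gradedProj ℳ i x) := by
  induction x using Decomposition.inductionOn ℳ with
  | zero => simp
  | @homogeneous m x =>
    obtain ⟨x, hx⟩ := x
    by_cases h : m = i
    · subst h
      rw [gradedProj_of_mem_same hx, gradedProj_of_mem_same (hg m x hx)]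
    · rw [gradedProj_of_mem_ne hx h, map_zero,
        gradedProj_of_mem_ne (hg m x hx) (by simpa using h)]
  | add a b ha hb => simp only [map_add, ha, hb]

lemma mem_iff_map_mem_of_injective {g : M →+ M'} {k : ι}
    (hg : ∀ i, ∀ x ∈ ℳ i, g x ∈ ℳ' (i + k)) (hinj : Function.Injective g) {i : ι} {x : M} :
    x ∈ ℳ i ↔ g x ∈ ℳ' (i + k) := by
  refine ⟨hg i x, fun hgx => ?_⟩
  have : g x = g (gradedProj ℳ i x) := by
    rw [← gradedProj_map_of_forall_mem hg, gradedProj_of_mem_same hgx]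
  exact hinj this ▸ gradedProj_mem ℳ i x

end GradedComponents

section LocalEndomorphismRing

variable {R M M' : Type*} [Ring R] [AddCommGroup M] [Module R M] [AddCommGroup M'] [Module R M']
  [IsLocalRing (Module.End R M)]

lemma Module.End.isUnit_of_apply_eq_self {e : Module.End R M} {x : M} (hx : x ≠ 0)
    (he : e x = x) : IsUnit e := by
  refine (IsLocalRing.isUnit_or_isUnit_of_add_one (add_sub_cancel e 1)).resolve_right fun h => hx ?_
  exact ((Module.End.isUnit_iff _).mp h).injective (by simp [he])

lemma exists_bijective_of_forall_exists_sum_apply_eq {ι : Type*} (f : M ≃ₗ[R] M')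
    (F : ι → M →ₗ[R] M') (hF : ∀ x, ∃ S : Finset ι, ∑ k ∈ S, F k x = f x) :
    ∃ k, Function.Bijective (F k) := by
  obtain ⟨x, hx⟩ := DFunLike.ne_iff.mp (one_ne_zero : (1 : Module.End R M) ≠ 0)
  obtain ⟨S, hS⟩ := hF x
  have hunit : IsUnit (∑ k ∈ S, f.symm.toLinearMap ∘ₗ F k) :=
    Module.End.isUnit_of_apply_eq_self (x := x) (by simpa using hx)
      (by simp [LinearMap.sum_apply, ← map_sum, hS])
  obtain ⟨k, -, hk⟩ := IsLocalRing.exists_of_isUnit_sum hunit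
  refine ⟨k, ?_⟩
  simpa [Function.comp_def] using f.bijective.comp ((Module.End.isUnit_iff _).mp hk)

end LocalEndomorphismRing

/-- Uniqueness of graded lifts: let `R` be a `ℤ`-graded ring and `M`, `M'` graded
`R`-modules which are isomorphic as ungraded `R`-modules.  If the endomorphism ring of
the ungraded module `M` is local, then `M' ≅ M{j}` as graded `R`-modules for some shift
`j` (where `M{j}^i = M^{i+j}`). -/
theorem stmt17 {R M M' : Type*} [Ring R] [AddCommGroup M] [Module R M]
    [AddCommGroup M'] [Module R M']
    (𝒜 : ℤ → AddSubgroup R) [GradedRing 𝒜]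
    (ℳ : ℤ → AddSubgroup M) [DirectSum.Decomposition ℳ]
    (ℳ' : ℤ → AddSubgroup M') [DirectSum.Decomposition ℳ']
    (hM : ∀ (i j : ℤ), ∀ r ∈ 𝒜 i, ∀ x ∈ ℳ j, r • x ∈ ℳ (i + j))
    (hM' : ∀ (i j : ℤ), ∀ r ∈ 𝒜 i, ∀ x ∈ ℳ' j, r • x ∈ ℳ' (i + j))
    (hiso : Nonempty (M ≃ₗ[R] M'))
    (hlocal : IsLocalRing (Module.End R M)) :
    ∃ (j : ℤ) (g : M ≃ₗ[R] M'), ∀ (i : ℤ) (x : M), x ∈ ℳ (i + j) ↔ g x ∈ ℳ' i := by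
  obtain ⟨f⟩ := hiso
  obtain ⟨k, hk⟩ := exists_bijective_of_forall_exists_sum_apply_eq f
    (gradedComponentₗ ℳ ℳ' hM hM' f.toLinearMap) fun x =>
      (exists_finset_forall_superset_sum_gradedComponent ℳ ℳ' _ x).imp fun S hS => hS S subset_rfl
  refine ⟨-k, LinearEquiv.ofBijective _ hk, fun i x => ?_⟩
  simpa using mem_iff_map_mem_of_injective
    (g := (gradedComponentₗ ℳ ℳ' hM hM' f.toLinearMap k).toAddMonoidHom)
    (fun _ _ => gradedComponent_mem ℳ' _ k) hk.injective (i := i + -k) (x := x)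
end
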